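/- arXiv:2412.04145 — 4 statements merged into one kernel-verified Lean document; each statement's English description precedes it below -/
import Mathlib

section
/- Let (T,β) be a tree decomposition of a graph G, and let U ⊆ V(G) be such that G[U] is connected. Then for every node t ∈ V(T), either the induced subgraph tor(t)[U ∩ β(t)] of the torso of t is connected, or every connected component of tor(t)[U ∩ β(t)] contains a vertex of the adhesion σ(t). -/
/-- A rooted tree decomposition of a graph `G`.  The rooted tree on the index type `ι` is
given by a parent function together with a root which every node reaches by iterating
`parent`.  The bags satisfy the usual covering, edge and (subtree-)connectivity axioms;
the connectivity axiom is phrased for rooted trees: if `v` lies in the bag of `t` but not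
in the bag of its parent (and `t` is not the root), then every node whose bag contains `v`
is a descendant of `t`. -/
structure RootedTreeDecomp (V : Type*) (ι : Type*) (G : SimpleGraph V) where
  parent : ι → ι
  root : ι
  parent_root : parent root = root
  reaches_root : ∀ t : ι, ∃ n : ℕ, parent^[n] t = root
  bag : ι → Set V
  bag_cover : ∀ v : V, ∃ t : ι, v ∈ bag t
  bag_edge : ∀ ⦃u v : V⦄, G.Adj u v → ∃ t : ι, u ∈ bag t ∧ v ∈ bag t
  bag_conn : ∀ (v : V) (t : ι), v ∈ bag t → t ≠ root → v ∉ bag (parent t) →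
      ∀ s : ι, v ∈ bag s → ∃ n : ℕ, parent^[n] s = t

namespace RootedTreeDecomp

variable {V ι : Type*} {G : SimpleGraph V}

open Classical

/-- The adhesion `σ(t) = β(t) ∩ β(parent t)`, with `σ(root) = ∅`. -/
noncomputable def adhesion (D : RootedTreeDecomp V ι G) (t : ι) : Set V :=
  if t = D.root then ∅ else D.bag t ∩ D.bag (D.parent t)

/-- `s` is a child of `t` in the rooted tree. -/
def IsChild (D : RootedTreeDecomp V ι G) (s t : ι) : Prop :=
  s ≠ D.root ∧ D.parent s = t

/-- The set `γ(t)`: the union of the bags over the subtree rooted at `t`. -/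
def subtreeBags (D : RootedTreeDecomp V ι G) (t : ι) : Set V :=
  ⋃ s ∈ {s : ι | ∃ n : ℕ, D.parent^[n] s = t}, D.bag s

/-- The torso of a node `t`: the graph on the bag `β(t)` (as a graph with vertex set `V`,
with all edges inside `β(t)`) obtained from `G[β(t)]` by making the adhesion `σ(s)` of every
child `s` of `t` into a clique. -/
def torso (D : RootedTreeDecomp V ι G) (t : ι) : SimpleGraph V where
  Adj u v := u ≠ v ∧ u ∈ D.bag t ∧ v ∈ D.bag t ∧
    (G.Adj u v ∨ ∃ s : ι, D.IsChild s t ∧ u ∈ D.adhesion s ∧ v ∈ D.adhesion s)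
  symm := by
    constructor
    rintro u v ⟨hne, hu, hv, h⟩
    refine ⟨hne.symm, hv, hu, ?_⟩
    rcases h with h | ⟨s, hs, h1, h2⟩
    · exact Or.inl h.symm
    · exact Or.inr ⟨s, hs, h2, h1⟩
  loopless := ⟨fun u h => h.1 rfl⟩

end RootedTreeDecomp

/-!
Suppose a component `K` of `tor(t)[U ∩ β(t)]` avoids `σ(t)`. Add to `K` the vertices of `U`
outside `β(t)` that lie in the subtree of a child `s` of `t` whose adhesion `σ(s)` meets `K`.
This set is closed under the edges of `G[U]`: an edge from `K` to a vertex outside `β(t)` cannot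
go towards the root (its end in `β(t)` would lie in `σ(t)`), so it enters the subtree of a child
`s` through `σ(s)`; and an edge leaving that subtree returns to `β(t)` inside `σ(s)`, which is a
clique of the torso. As `G[U]` is connected, the set contains `U ∩ β(t)`, so `K` is everything.
-/

theorem SimpleGraph.Reachable.of_adj_closed {W : Type*} {H : SimpleGraph W} {P : W → Prop}
    (hP : ∀ ⦃u v⦄, H.Adj u v → P u → P v) {u v : W} (huv : H.Reachable u v) (hu : P u) :
    P v := by
  obtain ⟨p⟩ := huv
  induction p with
  | nil => exact hu
  | cons h _ ih => exact ih (hP h hu)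

namespace RootedTreeDecomp

variable {V ι : Type*} {G : SimpleGraph V} (D : RootedTreeDecomp V ι G)

def IsDescendant (r s : ι) : Prop := ∃ n, D.parent^[n] r = s

lemma isDescendant_refl (r : ι) : D.IsDescendant r r := ⟨0, rfl⟩

lemma isDescendant_root (r : ι) : D.IsDescendant r D.root := D.reaches_root r

variable {D}

lemma IsDescendant.trans {r s u : ι} (hrs : D.IsDescendant r s) (hsu : D.IsDescendant s u) :
    D.IsDescendant r u := by
  obtain ⟨m, rfl⟩ := hrs
  obtain ⟨n, rfl⟩ := hsu
  exact ⟨n + m, Function.iterate_add_apply _ _ _ _⟩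

lemma mem_subtreeBags_iff {v : V} {s : ι} :
    v ∈ D.subtreeBags s ↔ ∃ r, D.IsDescendant r s ∧ v ∈ D.bag r := by
  simp [subtreeBags, IsDescendant]

lemma mem_adhesion_iff {v : V} {t : ι} :
    v ∈ D.adhesion t ↔ t ≠ D.root ∧ v ∈ D.bag t ∧ v ∈ D.bag (D.parent t) := by
  unfold adhesion
  split_ifs with h <;> simp [h]

lemma IsChild.mem_adhesion {s t : ι} (hs : D.IsChild s t) {v : V} (hvs : v ∈ D.bag s)
    (hvt : v ∈ D.bag t) : v ∈ D.adhesion s :=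
  mem_adhesion_iff.2 ⟨hs.1, hvs, hs.2 ▸ hvt⟩

lemma eq_root_of_iterate_eq_self {w : ι} {n : ℕ} (hw : D.parent^[n] w = w) (hn : n ≠ 0) :
    w = D.root := by
  obtain ⟨k, hk⟩ := D.reaches_root w
  have hle : k ≤ n * k := Nat.le_mul_of_pos_left k (Nat.pos_of_ne_zero hn)
  calc w = D.parent^[n * k] w := ((Function.IsPeriodicPt.mul_const hw k).eq).symm
    _ = D.parent^[n * k - k] (D.parent^[k] w) := by
        rw [← Function.iterate_add_apply, Nat.sub_add_cancel hle]
    _ = D.root := by rw [hk, Function.iterate_fixed D.parent_root]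

lemma IsChild.not_isDescendant {s t : ι} (hs : D.IsChild s t) : ¬ D.IsDescendant t s := by
  rintro ⟨m, hm⟩
  refine hs.1 (eq_root_of_iterate_eq_self (n := m + 1) ?_ m.succ_ne_zero)
  rw [Function.iterate_succ_apply, hs.2, hm]

lemma exists_isChild_of_isDescendant {r t : ι} (hrt : D.IsDescendant r t) (hne : r ≠ t) :
    ∃ s, D.IsChild s t ∧ D.IsDescendant r s := by
  obtain ⟨n, hn⟩ := hrt
  induction n generalizing r with
  | zero => exact absurd hn hne
  | succ n ih =>
    rw [Function.iterate_succ_apply] at hn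
    by_cases hp : D.parent r = t
    · refine ⟨r, ⟨fun hr => hne ?_, hp⟩, D.isDescendant_refl r⟩
      rw [← hp, hr, D.parent_root]
    · obtain ⟨s, hs, hrs⟩ := ih hp hn
      exact ⟨s, hs, IsDescendant.trans ⟨1, rfl⟩ hrs⟩

lemma mem_adhesion_of_not_isDescendant {v : V} {t r : ι} (hvt : v ∈ D.bag t)
    (hvr : v ∈ D.bag r) (hrt : ¬ D.IsDescendant r t) : v ∈ D.adhesion t := by
  have ht : t ≠ D.root := fun h => hrt (h ▸ D.isDescendant_root r)
  refine mem_adhesion_iff.2 ⟨ht, hvt, ?_⟩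
  by_contra hvp
  exact hrt (D.bag_conn v t hvt ht hvp r hvr)

lemma mem_bag_of_isDescendant_of_not_isDescendant {v : V} {r r' s : ι} (hvr : v ∈ D.bag r)
    (hrs : D.IsDescendant r s) (hvr' : v ∈ D.bag r') (hr's : ¬ D.IsDescendant r' s) :
    v ∈ D.bag s := by
  obtain ⟨n, rfl⟩ := hrs
  induction n generalizing r with
  | zero => exact hvr
  | succ n ih =>
    have hr'r : ¬ D.IsDescendant r' r := fun h => hr's (h.trans ⟨n + 1, rfl⟩)
    exact ih (mem_adhesion_iff.1 (mem_adhesion_of_not_isDescendant hvr hvr' hr'r)).2.2 hr's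

lemma IsChild.mem_adhesion_of_mem_subtreeBags {s t : ι} (hs : D.IsChild s t) {v : V}
    (hvs : v ∈ D.subtreeBags s) (hvt : v ∈ D.bag t) : v ∈ D.adhesion s := by
  obtain ⟨r, hrs, hvr⟩ := mem_subtreeBags_iff.1 hvs
  exact hs.mem_adhesion
    (mem_bag_of_isDescendant_of_not_isDescendant hvr hrs hvt hs.not_isDescendant) hvt

lemma mem_adhesion_or_exists_isChild_of_adj {a b : V} {t : ι} (hab : G.Adj a b)
    (hat : a ∈ D.bag t) (hbt : b ∉ D.bag t) :
    a ∈ D.adhesion t ∨ ∃ s, D.IsChild s t ∧ a ∈ D.adhesion s ∧ b ∈ D.subtreeBags s := by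
  obtain ⟨r, har, hbr⟩ := D.bag_edge hab
  by_cases hrt : D.IsDescendant r t
  · obtain ⟨s, hs, hrs⟩ := exists_isChild_of_isDescendant hrt (by rintro rfl; exact hbt hbr)
    refine Or.inr ⟨s, hs, hs.mem_adhesion ?_ hat, mem_subtreeBags_iff.2 ⟨r, hrs, hbr⟩⟩
    exact mem_bag_of_isDescendant_of_not_isDescendant har hrs hat hs.not_isDescendant
  · exact Or.inl (mem_adhesion_of_not_isDescendant hat har hrt)

lemma IsChild.mem_subtreeBags_of_adj {s t : ι} (hs : D.IsChild s t) {a b : V}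
    (has : a ∈ D.subtreeBags s) (hat : a ∉ D.bag t) (hab : G.Adj a b) :
    b ∈ D.subtreeBags s := by
  obtain ⟨r, har, hbr⟩ := D.bag_edge hab
  refine mem_subtreeBags_iff.2 ⟨r, ?_, hbr⟩
  by_contra hrs
  obtain ⟨r₀, hr₀s, har₀⟩ := mem_subtreeBags_iff.1 has
  have := mem_adhesion_of_not_isDescendant
    (mem_bag_of_isDescendant_of_not_isDescendant har₀ hr₀s har hrs) har hrs
  exact hat (hs.2 ▸ (mem_adhesion_iff.1 this).2.2)

lemma IsChild.torso_adj {s t : ι} (hs : D.IsChild s t) {u v : V} (hu : u ∈ D.adhesion s)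
    (hv : v ∈ D.adhesion s) (huv : u ≠ v) : (D.torso t).Adj u v := by
  have hut := (mem_adhesion_iff.1 hu).2.2
  have hvt := (mem_adhesion_iff.1 hv).2.2
  rw [hs.2] at hut hvt
  exact ⟨huv, hut, hvt, Or.inr ⟨s, hs, hu, hv⟩⟩

lemma torso_adj_of_adj {t : ι} {u v : V} (huv : G.Adj u v) (hu : u ∈ D.bag t)
    (hv : v ∈ D.bag t) : (D.torso t).Adj u v :=
  ⟨huv.ne, hu, hv, Or.inl huv⟩

section Component

variable {U : Set V} {t : ι} (K : ((D.torso t).induce (U ∩ D.bag t)).ConnectedComponent)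

lemma mem_supp_of_mem_adhesion {s : ι} (hs : D.IsChild s t) {y z : ↥(U ∩ D.bag t)}
    (hy : y ∈ K.supp) (hys : (y : V) ∈ D.adhesion s) (hzs : (z : V) ∈ D.adhesion s) :
    z ∈ K.supp := by
  obtain rfl | hyz := eq_or_ne y z
  · exact hy
  · exact K.mem_supp_of_adj_mem_supp hy (hs.torso_adj hys hzs (Subtype.val_injective.ne hyz))

def attachedVertices : Set V :=
  Subtype.val '' K.supp ∪ {v | v ∉ D.bag t ∧ ∃ s, D.IsChild s t ∧ v ∈ D.subtreeBags s ∧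
    ∃ y ∈ K.supp, (y : V) ∈ D.adhesion s}

lemma mem_attachedVertices_of_adj (hK : ∀ y ∈ K.supp, (y : V) ∉ D.adhesion t) {a b : V}
    (hbU : b ∈ U) (hab : G.Adj a b) (ha : a ∈ D.attachedVertices K) :
    b ∈ D.attachedVertices K := by
  by_cases hbt : b ∈ D.bag t
  · left
    refine ⟨⟨b, hbU, hbt⟩, ?_, rfl⟩
    rcases ha with ⟨y, hy, rfl⟩ | ⟨hat, s, hs, has, y, hy, hys⟩
    · exact K.mem_supp_of_adj_mem_supp hy (torso_adj_of_adj hab y.2.2 hbt)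
    · exact D.mem_supp_of_mem_adhesion K hs hy hys
        (hs.mem_adhesion_of_mem_subtreeBags (hs.mem_subtreeBags_of_adj has hat hab) hbt)
  · right
    refine ⟨hbt, ?_⟩
    rcases ha with ⟨y, hy, rfl⟩ | ⟨hat, s, hs, has, hy⟩
    · obtain hσ | ⟨s, hs, hys, hbs⟩ := mem_adhesion_or_exists_isChild_of_adj hab y.2.2 hbt
      · exact absurd hσ (hK y hy)
      · exact ⟨s, hs, hbs, y, hy, hys⟩
    · exact ⟨s, hs, hs.mem_subtreeBags_of_adj has hat hab, hy⟩

lemma supp_eq_univ_of_forall_not_mem_adhesion (hU : (G.induce U).Connected)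
    (hK : ∀ y ∈ K.supp, (y : V) ∉ D.adhesion t) : K.supp = Set.univ := by
  obtain ⟨x, rfl⟩ := K.exists_rep
  refine Set.eq_univ_of_forall fun z => ?_
  have hz : (z : V) ∈ D.attachedVertices _ :=
    (hU.preconnected ⟨x, x.2.1⟩ ⟨z, z.2.1⟩).of_adj_closed (P := (↑· ∈ D.attachedVertices _))
      (fun a b hab ha => D.mem_attachedVertices_of_adj _ hK b.2 hab ha)
      (Or.inl ⟨x, rfl, rfl⟩)
  rcases hz with ⟨y, hy, hyz⟩ | ⟨hzt, -⟩
  · rwa [← Subtype.ext hyz]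
  · exact absurd z.2.2 hzt

end Component

end RootedTreeDecomp

/-- Let `(T,β)` be a tree decomposition of `G` and `U ⊆ V(G)` with `G[U]`
connected.  Then for every node `t`, either the induced subgraph `tor(t)[U ∩ β(t)]` of the
torso of `t` is connected, or every connected component of `tor(t)[U ∩ β(t)]` contains a
vertex of the adhesion `σ(t)` (i.e. every vertex of `U ∩ β(t)` can reach, inside
`tor(t)[U ∩ β(t)]`, a vertex of `σ(t)`). -/
theorem torso_restriction_connected_or_components_meet_adhesion
    {V ι : Type*} {G : SimpleGraph V} (D : RootedTreeDecomp V ι G)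
    (U : Set V) (hU : (G.induce U).Connected) (t : ι) :
    ((D.torso t).induce (U ∩ D.bag t)).Connected ∨
      ∀ x : ↥(U ∩ D.bag t), ∃ y : ↥(U ∩ D.bag t),
        ((D.torso t).induce (U ∩ D.bag t)).Reachable x y ∧ (y : V) ∈ D.adhesion t := by
  by_cases h : ∀ K : ((D.torso t).induce (U ∩ D.bag t)).ConnectedComponent,
      ∃ y ∈ K.supp, (y : V) ∈ D.adhesion t
  · right
    intro x
    obtain ⟨y, hy, hyσ⟩ := h (SimpleGraph.connectedComponentMk _ x)
    exact ⟨y, (SimpleGraph.ConnectedComponent.exact hy).symm, hyσ⟩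
  · left
    push Not at h
    obtain ⟨K, hK⟩ := h
    have hK_univ := D.supp_eq_univ_of_forall_not_mem_adhesion K hU hK
    obtain ⟨x, rfl⟩ := K.exists_rep
    refine (SimpleGraph.connected_iff_exists_forall_reachable _).2 ⟨x, fun y => ?_⟩
    have hy : y ∈ (SimpleGraph.connectedComponentMk _ x).supp := hK_univ ▸ Set.mem_univ y
    exact (SimpleGraph.ConnectedComponent.exact hy).symm
end

section
/- A graph G contains a graph G' as a minor if and only if there exist a subset U ⊆ V(G) and a surjective map ρ : U → V(G') such that for every subset U' ⊆ V(G') with G'[U'] connected, the induced subgraph G[ρ^{-1}(U')] is connected. -/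
/-!
Given a minor model with branch sets `B w`, send each vertex of `U = ⋃ w, B w` to the unique
branch set containing it; the preimage of a connected `U'` is `⋃ w ∈ U', B w`, which is connected
because the connected branch sets are glued along a connected pattern of edges. Conversely, the
fibres `ρ⁻¹(w)` are connected (take `U' = {w}`), and for an edge `ww'` of `G'` the connected set
`ρ⁻¹{w, w'}` is split into the two nonempty fibres, so some edge of `G` crosses between them.
-/

open Function Set SimpleGraph

/-- `H` is a minor of `G` (equivalently: `H` can be obtained from `G` by deleting vertices,
deleting edges and contracting edges): there is a minor model of `H` in `G`, i.e. a family
of nonempty, pairwise disjoint branch sets `B w ⊆ V(G)`, each inducing a connected subgraph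
of `G`, such that every edge of `H` is realized by an edge of `G` between the corresponding
branch sets. -/
def IsMinor {W V : Type*} (H : SimpleGraph W) (G : SimpleGraph V) : Prop :=
  ∃ B : W → Set V,
    (∀ w : W, (G.induce (B w)).Connected) ∧
    (∀ w w' : W, w ≠ w' → Disjoint (B w) (B w')) ∧
    (∀ ⦃w w' : W⦄, H.Adj w w' → ∃ u ∈ B w, ∃ v ∈ B w', G.Adj u v)

lemma Set.exists_mem_iff_eq_of_pairwise_disjoint {ι α : Type*} {t : ι → Set α}
    (h : Pairwise (Disjoint on t)) :
    ∃ ρ : (⋃ i, t i) → ι, ∀ (x : ⋃ i, t i) (i : ι), (x : α) ∈ t i ↔ ρ x = i := by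
  choose ρ hρ using fun x : ⋃ i, t i => mem_iUnion.1 x.2
  refine ⟨ρ, fun x i => ⟨fun hx => ?_, fun hi => hi ▸ hρ x⟩⟩
  by_contra hne
  exact disjoint_left.1 (h hne) (hρ x) hx

namespace SimpleGraph

variable {V : Type*} {G : SimpleGraph V}

theorem induce_iUnion_connected {ι : Type*} {H : SimpleGraph ι} {B : ι → Set V}
    (hH : H.Connected) (hB : ∀ i, (G.induce (B i)).Connected)
    (hadj : ∀ ⦃i j⦄, H.Adj i j → ∃ u ∈ B i, ∃ v ∈ B j, G.Adj u v) :
    (G.induce (⋃ i, B i)).Connected := by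
  let incl i : G.induce (B i) →g G.induce (⋃ i, B i) :=
    (G.induceHomOfLE (subset_iUnion B i)).toHom
  have within i (u v : B i) : (G.induce (⋃ i, B i)).Reachable (incl i u) (incl i v) :=
    ((hB i).preconnected u v).map (incl i)
  have along {i j} (p : H.Walk i j) (u : B i) (v : B j) :
      (G.induce (⋃ i, B i)).Reachable (incl i u) (incl j v) := by
    induction p with
    | nil => exact within _ u v
    | cons hij _ ih =>
      obtain ⟨x, hx, y, hy, hxy⟩ := hadj hij
      have hstep : (G.induce (⋃ i, B i)).Adj (incl _ ⟨x, hx⟩) (incl _ ⟨y, hy⟩) := hxy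
      exact (within _ u ⟨x, hx⟩).trans (hstep.reachable.trans (ih ⟨y, hy⟩ v))
  obtain ⟨i⟩ := hH.nonempty
  obtain ⟨u⟩ := (hB i).nonempty
  have : Nonempty (⋃ i, B i) := ⟨incl i u⟩
  refine ⟨fun ⟨x, hx⟩ ⟨y, hy⟩ => ?_⟩
  obtain ⟨i, hi⟩ := mem_iUnion.1 hx
  obtain ⟨j, hj⟩ := mem_iUnion.1 hy
  exact along (hH.preconnected i j).some ⟨x, hi⟩ ⟨y, hj⟩

theorem exists_adj_of_induce_union_preconnected {s t : Set V}
    (hst : (G.induce (s ∪ t)).Preconnected) (hs : s.Nonempty) (ht : t.Nonempty)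
    (hdisj : Disjoint s t) : ∃ u ∈ s, ∃ v ∈ t, G.Adj u v := by
  obtain ⟨u, hu⟩ := hs
  obtain ⟨v, hv⟩ := ht
  obtain ⟨p⟩ := hst ⟨u, .inl hu⟩ ⟨v, .inr hv⟩
  obtain ⟨d, -, hfst, hsnd⟩ :=
    p.exists_boundary_dart {x : ↥(s ∪ t) | (x : V) ∈ s} hu (disjoint_right.1 hdisj hv)
  exact ⟨d.fst, hfst, d.snd, d.snd.2.resolve_left hsnd, d.adj⟩

variable {W : Type*} {H : SimpleGraph W}

theorem IsMinor.exists_connected_preimage (h : IsMinor H G) :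
    ∃ (U : Set V) (ρ : U → W), Surjective ρ ∧
      ∀ U' : Set W, (H.induce U').Connected → (G.induce ((↑) '' (ρ ⁻¹' U'))).Connected := by
  obtain ⟨B, hconn, hdisj, hedge⟩ := h
  obtain ⟨ρ, hρ⟩ := exists_mem_iff_eq_of_pairwise_disjoint hdisj
  refine ⟨_, ρ, fun w => ?_, fun U' hU' => ?_⟩
  · obtain ⟨⟨v, hv⟩⟩ := (hconn w).nonempty
    exact ⟨⟨v, mem_iUnion_of_mem w hv⟩, (hρ _ w).1 hv⟩
  · have hpre : (↑) '' (ρ ⁻¹' U') = ⋃ w : U', B w := by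
      ext v
      constructor
      · rintro ⟨x, hx, rfl⟩
        exact mem_iUnion.2 ⟨⟨ρ x, hx⟩, (hρ x _).2 rfl⟩
      · rintro ⟨-, ⟨w, rfl⟩, hv⟩
        have hvU := mem_iUnion_of_mem w.1 hv
        refine ⟨⟨v, hvU⟩, ?_, rfl⟩
        rw [mem_preimage, (hρ ⟨v, hvU⟩ w).1 hv]
        exact w.2
    rw [hpre]
    exact induce_iUnion_connected hU' (fun w => hconn w) (fun w w' hww' => hedge hww')

theorem isMinor_of_connected_preimage {U : Set V} (ρ : U → W) (hρ : Surjective ρ)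
    (hconn : ∀ U' : Set W, (H.induce U').Connected →
      (G.induce ((↑) '' (ρ ⁻¹' U'))).Connected) :
    IsMinor H G := by
  have hdisj {w w' : W} (hne : w ≠ w') :
      Disjoint ((↑) '' (ρ ⁻¹' {w}) : Set V) ((↑) '' (ρ ⁻¹' {w'})) :=
    (disjoint_image_iff Subtype.val_injective).2 ((disjoint_singleton.2 hne).preimage ρ)
  refine ⟨fun w => (↑) '' (ρ ⁻¹' {w}), fun w => hconn {w} (by simp), fun w w' => hdisj,
    fun w w' hww' => ?_⟩
  have hpair := hconn {w, w'} (induce_pair_connected_of_adj hww')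
  rw [insert_eq, preimage_union, image_union] at hpair
  exact exists_adj_of_induce_union_preconnected hpair.preconnected
    ((show (ρ ⁻¹' {w}).Nonempty from hρ w).image _)
    ((show (ρ ⁻¹' {w'}).Nonempty from hρ w').image _) (hdisj hww'.ne)

end SimpleGraph

/-- A graph `G` contains a graph `G'` as a minor if and only if there exist
a subset `U ⊆ V(G)` and a surjective map `ρ : U → V(G')` such that for every subset
`U' ⊆ V(G')` with `G'[U']` connected, the induced subgraph `G[ρ⁻¹(U')]` is connected. -/
theorem isMinor_iff_exists_connectivity_preserving_map
    {V W : Type*} (G : SimpleGraph V) (G' : SimpleGraph W) :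
    IsMinor G' G ↔
      ∃ (U : Set V) (ρ : U → W), Function.Surjective ρ ∧
        ∀ U' : Set W, (G'.induce U').Connected →
          (G.induce {v : V | ∃ hv : v ∈ U, ρ ⟨v, hv⟩ ∈ U'}).Connected := by
  have hpreimage (U : Set V) (ρ : U → W) (U' : Set W) :
      {v : V | ∃ hv : v ∈ U, ρ ⟨v, hv⟩ ∈ U'} = (↑) '' (ρ ⁻¹' U') :=
    (Subtype.coe_image (s := ρ ⁻¹' U')).symm
  constructor
  · intro hminor
    obtain ⟨U, ρ, hρ, hconn⟩ := hminor.exists_connected_preimage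
    exact ⟨U, ρ, hρ, fun U' hU' => hpreimage U ρ U' ▸ hconn U' hU'⟩
  · rintro ⟨U, ρ, hρ, hconn⟩
    exact isMinor_of_connected_preimage ρ hρ fun U' hU' => hpreimage U ρ U' ▸ hconn U' hU'
end

section
/- Let G be a graph of maximum degree α in which at most β vertices have degree at least 3. Then for every set V ⊆ V(G) such that G[V] has γ connected components, the graph G − V has at most f(α,β,γ) more connected components than G, for some function f depending only on α, β, γ. Concretely, G − V has at most O(γ · α^{O(β)}) more connected components than G. -/
/-!
Components of `G − X` containing no vertex of the outer boundary `∂X` (the vertices outside `X`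
with a neighbour in `X`) are components of `G` as well, so `c(G − X) ≤ c(G) + |∂X|`. Every
boundary vertex is the end of an edge leaving `X`, and there are
`∑_{v ∈ X} deg v − 2 e(G[X]) ≤ (2|X| + αβ) − 2(|X| − γ) = 2γ + αβ` such edges: vertices of degree
at most `2` contribute at most `2` each, and a graph on `|X|` vertices with `γ` components has at
least `|X| − γ` edges. When `α ≤ 1`, reachable vertices are equal or adjacent, so deleting
vertices splits no component.
-/

open Finset

namespace SimpleGraph

variable {V : Type*} {G : SimpleGraph V}

lemma Reachable.exists_adj_dist_lt {u v : V} (h : G.Reachable u v) (hne : u ≠ v) :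
    ∃ w, G.Adj u w ∧ G.dist w v < G.dist u v := by
  obtain ⟨p, hp⟩ := h.exists_walk_length_eq_dist
  cases p with
  | nil => exact absurd rfl hne
  | cons hadj q => exact ⟨_, hadj, (G.dist_le q).trans_lt (by simp [← hp])⟩

theorem card_le_card_edgeSet_add_card_connectedComponent [Finite V] (G : SimpleGraph V) :
    Nat.card V ≤ Nat.card G.edgeSet + Nat.card G.ConnectedComponent := by
  set root : V → V := fun v => (G.connectedComponentMk v).out
  have reachable_root (v : V) : G.Reachable v (root v) :=
    ConnectedComponent.exact (G.connectedComponentMk v).out_eq.symm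
  have root_eq_of_adj {v w : V} (h : G.Adj v w) : root v = root w := by
    simp only [root, ConnectedComponent.connectedComponentMk_eq_of_adj h]
  choose! parent adj_parent dist_parent_lt using
    fun v (hv : v ≠ root v) => (reachable_root v).exists_adj_dist_lt hv
  have card_roots : {v | v = root v}.ncard ≤ Nat.card G.ConnectedComponent := by
    rw [← Set.ncard_univ]
    refine Set.ncard_le_ncard_of_injOn G.connectedComponentMk (fun _ _ => trivial) ?_
    intro v (hv : v = root v) w (hw : w = root w) h
    rw [hv, hw]
    simp only [root, h]
  have card_nonroots : {v | v = root v}ᶜ.ncard ≤ Nat.card G.edgeSet := by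
    -- distance to the root drops from a vertex to its parent, so no edge is picked twice
    rw [← Nat.card_coe_set_eq]
    refine Set.ncard_le_ncard_of_injOn (fun v => s(v, parent v)) (fun v hv => adj_parent v hv) ?_
    intro v (hv : v ≠ root v) w (hw : w ≠ root w) h
    rcases Sym2.eq_iff.mp h with ⟨rfl, -⟩ | ⟨hvw, hwv⟩
    · rfl
    · have hv' := dist_parent_lt v hv
      have hw' := dist_parent_lt w hw
      rw [hwv, root_eq_of_adj (adj_parent v hv), hwv] at hv'
      rw [← hvw] at hw'
      omega
  rw [← Set.ncard_add_ncard_compl {v | v = root v}]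
  omega

lemma Reachable.induce_of_forall_adj_mem {s : Set V} {u w : s} (h : G.Reachable u w)
    (hs : ∀ x : s, (G.induce s).Reachable u x → ∀ y, G.Adj x y → y ∈ s) :
    (G.induce s).Reachable u w := by
  suffices ∀ y, G.Reachable u y → ∃ hy : y ∈ s, (G.induce s).Reachable u ⟨y, hy⟩ from
    (this w h).2
  intro y hy
  rw [reachable_iff_reflTransGen] at hy
  induction hy with
  | refl => exact ⟨u.2, .rfl⟩
  | tail _ hadj ih =>
    obtain ⟨hx, hux⟩ := ih
    exact ⟨hs _ hux _ hadj, hux.trans (Adj.reachable (G := G.induce s) hadj)⟩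

lemma Reachable.eq_or_adj_of_subsingleton_neighborSet {u w : V} (h : G.Reachable u w)
    (hG : ∀ v, (G.neighborSet v).Subsingleton) : u = w ∨ G.Adj u w := by
  rw [reachable_iff_reflTransGen] at h
  induction h with
  | refl => exact .inl rfl
  | tail _ hadj ih =>
    rcases ih with rfl | hux
    · exact .inr hadj
    · exact .inl (hG _ hux.symm hadj)

def outerBoundary (G : SimpleGraph V) (s : Set V) : Set V := {u | u ∉ s ∧ ∃ v ∈ s, G.Adj u v}

lemma outerBoundary_empty : G.outerBoundary ∅ = ∅ := by
  simp [outerBoundary]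

theorem card_connectedComponent_induce_compl_le [Finite V] (s : Set V) :
    Nat.card (G.induce sᶜ).ConnectedComponent ≤
      Nat.card G.ConnectedComponent + (G.outerBoundary s).ncard := by
  set touching : Set (G.induce sᶜ).ConnectedComponent :=
    (G.induce sᶜ).connectedComponentMk '' {u | ↑u ∈ G.outerBoundary s}
  have card_touching : touching.ncard ≤ (G.outerBoundary s).ncard :=
    (Set.ncard_image_le (Set.toFinite _)).trans <|
      Set.ncard_le_ncard_of_injOn Subtype.val (fun _ hu => hu) Subtype.val_injective.injOn
  have card_untouched : touchingᶜ.ncard ≤ Nat.card G.ConnectedComponent := by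
    rw [← Set.ncard_univ]
    refine Set.ncard_le_ncard_of_injOn (ConnectedComponent.map (Embedding.induce sᶜ).toHom)
      (fun _ _ => trivial) ?_
    intro c hc d _ h
    induction c, d using ConnectedComponent.ind₂ with | _ u w
    refine ConnectedComponent.sound <|
      Reachable.induce_of_forall_adj_mem (ConnectedComponent.exact h) ?_
    intro x hux y hxy
    by_contra hy
    exact hc ⟨x, ⟨x.2, y, not_not.mp hy, hxy⟩, (ConnectedComponent.sound hux).symm⟩
  rw [← Set.ncard_add_ncard_compl touching]
  omega

theorem card_connectedComponent_induce_le_of_subsingleton_neighborSet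
    (hG : ∀ v, (G.neighborSet v).Subsingleton) (s : Set V) [Finite G.ConnectedComponent] :
    Nat.card (G.induce s).ConnectedComponent ≤ Nat.card G.ConnectedComponent := by
  refine Nat.card_le_card_of_injective (ConnectedComponent.map (Embedding.induce s).toHom) ?_
  refine ConnectedComponent.ind₂ fun u w h => ConnectedComponent.sound ?_
  rcases (ConnectedComponent.exact h).eq_or_adj_of_subsingleton_neighborSet hG with huw | huw
  · rw [Subtype.ext huw]
  · exact Adj.reachable (G := G.induce s) huw

lemma ncard_neighborSet_eq_degree (v : V) [Fintype (G.neighborSet v)] :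
    (G.neighborSet v).ncard = G.degree v := by
  rw [← Nat.card_coe_set_eq, Nat.card_eq_fintype_card, card_neighborSet_eq_degree]

section Finite

variable [Fintype V] [DecidableRel G.Adj]

lemma degree_eq_degree_induce_add_card_filter_notMem (s : Set V) [DecidablePred (· ∈ s)]
    (v : s) :
    G.degree v = (G.induce s).degree v + #{u ∈ G.neighborFinset v | u ∉ s} := by
  classical
  rw [← card_neighborFinset_eq_degree, ← card_neighborFinset_eq_degree,
    ← Finset.card_map (Function.Embedding.subtype _), map_neighborFinset_induce,
    ← Finset.card_filter_add_card_filter_not (· ∈ s)]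
  congr 2
  ext
  simp

lemma ncard_outerBoundary_le_sum (s : Set V) [DecidablePred (· ∈ s)] :
    (G.outerBoundary s).ncard ≤ ∑ v : s, #{u ∈ G.neighborFinset v | u ∉ s} := by
  classical
  have : G.outerBoundary s ⊆ ↑(univ.biUnion fun v : s => {u ∈ G.neighborFinset v | u ∉ s}) := by
    rintro u ⟨hu, v, hv, huv⟩
    simp only [coe_biUnion, coe_univ, Set.mem_univ, Set.iUnion_true, Set.mem_iUnion]
    exact ⟨⟨v, hv⟩, by simpa using ⟨huv.symm, hu⟩⟩
  calc (G.outerBoundary s).ncard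
      ≤ #(univ.biUnion fun v : s => {u ∈ G.neighborFinset v | u ∉ s}) := by
        simpa only [Set.ncard_coe_finset] using Set.ncard_le_ncard this
    _ ≤ _ := card_biUnion_le

lemma sum_degree_le_two_mul_card_add {α β : ℕ} (hα : ∀ v, G.degree v ≤ α)
    (hβ : {v | 3 ≤ G.degree v}.ncard ≤ β) (t : Finset V) : ∑ v ∈ t, G.degree v ≤ 2 * #t + α * β := by
  have card_high : #{v ∈ t | 3 ≤ G.degree v} ≤ β := by
    refine le_trans ?_ hβ
    rw [← Set.ncard_coe_finset]
    exact Set.ncard_le_ncard fun v hv => (Finset.mem_filter.mp hv).2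
  have high : ∑ v ∈ t with 3 ≤ G.degree v, G.degree v ≤ #{v ∈ t | 3 ≤ G.degree v} * α :=
    Finset.sum_le_card_nsmul _ _ _ fun v _ => hα v
  have low : ∑ v ∈ t with ¬3 ≤ G.degree v, G.degree v ≤ #{v ∈ t | ¬3 ≤ G.degree v} * 2 :=
    Finset.sum_le_card_nsmul _ _ _ fun v hv => by have := (Finset.mem_filter.mp hv).2; omega
  have card_low := Finset.card_filter_le t (¬3 ≤ G.degree ·)
  have := Nat.mul_le_mul_right α card_high
  rw [← Finset.sum_filter_add_sum_filter_not t (3 ≤ G.degree ·)]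
  linarith

theorem ncard_outerBoundary_le {α β : ℕ} (hα : ∀ v, G.degree v ≤ α)
    (hβ : {v | 3 ≤ G.degree v}.ncard ≤ β) (s : Set V) :
    (G.outerBoundary s).ncard ≤ 2 * Nat.card (G.induce s).ConnectedComponent + α * β := by
  classical
  have forest := (G.induce s).card_le_card_edgeSet_add_card_connectedComponent
  have handshake := (G.induce s).sum_degrees_eq_twice_card_edges
  have split : ∑ v : s, G.degree v =
      ∑ v : s, (G.induce s).degree v + ∑ v : s, #{u ∈ G.neighborFinset v | u ∉ s} := by
    rw [← Finset.sum_add_distrib]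
    exact Finset.sum_congr rfl fun v _ => G.degree_eq_degree_induce_add_card_filter_notMem s v
  have boundary := G.ncard_outerBoundary_le_sum s
  have degrees := G.sum_degree_le_two_mul_card_add hα hβ s.toFinset
  rw [← Finset.sum_set_coe, Set.toFinset_card] at degrees
  rw [Nat.card_eq_fintype_card, Nat.card_eq_fintype_card (α := (G.induce s).edgeSet),
    ← edgeFinset_card] at forest
  omega

end Finite

end SimpleGraph

lemma two_mul_add_mul_le_two_mul_mul_pow {α β γ : ℕ} (hα : 2 ≤ α) (hγ : 1 ≤ γ) :
    2 * γ + α * β ≤ 2 * γ * α ^ (β + 1) := by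
  have hα1 : 1 ≤ α := by omega
  calc 2 * γ + α * β
      ≤ 2 * γ * (α * (β + 1)) := by
        nlinarith [Nat.mul_le_mul_right (α * β) hγ, Nat.mul_le_mul_left (2 * γ) hα1]
    _ ≤ 2 * γ * α ^ (β + 1) := by
      rw [pow_succ']
      exact Nat.mul_le_mul_left _ (Nat.mul_le_mul_left α (Nat.lt_pow_self hα))

/-- Let `G` be a (finite) graph of maximum degree `α` in which at most `β`
vertices have degree at least `3`.  Then for every vertex set `X` such that `G[X]` has `γ`
connected components, the graph `G − X` has at most `f(α,β,γ)` more connected components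
than `G`, for a function `f` depending only on `α, β, γ`; concretely one can take
`f(α,β,γ) = C · γ · α^{C·(β+1)}` for an absolute constant `C`. -/
theorem components_increase_bounded :
    ∃ (f : ℕ → ℕ → ℕ → ℕ) (C : ℕ),
      ∀ (V : Type) (_ : Fintype V) (G : SimpleGraph V) (α β γ : ℕ),
        (∀ v : V, (G.neighborSet v).ncard ≤ α) →
        ({v : V | 3 ≤ (G.neighborSet v).ncard}.ncard ≤ β) →
        ∀ X : Set V, Nat.card ((G.induce X).ConnectedComponent) = γ →
          Nat.card ((G.induce Xᶜ).ConnectedComponent) ≤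
              Nat.card G.ConnectedComponent + f α β γ ∧
            f α β γ ≤ C * γ * α ^ (C * (β + 1)) := by
  refine ⟨fun α β γ => 2 * γ * α ^ (β + 1), 2, fun V _ G α β γ hα hβ X hγ => ⟨?_, ?_⟩⟩
  · rcases le_or_gt α 1 with hα1 | hα2
    · have hG v : (G.neighborSet v).Subsingleton :=
        Set.ncard_le_one_iff_subsingleton.mp ((hα v).trans hα1)
      exact (G.card_connectedComponent_induce_le_of_subsingleton_neighborSet hG Xᶜ).trans
        (Nat.le_add_right _ _)
    classical
    simp only [SimpleGraph.ncard_neighborSet_eq_degree] at hα hβ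
    rcases Nat.eq_zero_or_pos γ with rfl | hγ0
    · have hX : X = ∅ := Set.eq_empty_of_forall_notMem fun v hv =>
        have : Nonempty (G.induce X).ConnectedComponent :=
          ⟨(G.induce X).connectedComponentMk ⟨v, hv⟩⟩
        Nat.card_pos.ne' hγ
      simpa [hX, SimpleGraph.outerBoundary_empty] using G.card_connectedComponent_induce_compl_le X
    calc Nat.card (G.induce Xᶜ).ConnectedComponent
        ≤ Nat.card G.ConnectedComponent + (G.outerBoundary X).ncard :=
          G.card_connectedComponent_induce_compl_le X
      _ ≤ Nat.card G.ConnectedComponent + (2 * γ + α * β) := by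
          rw [← hγ]; gcongr; exact G.ncard_outerBoundary_le hα hβ X
      _ ≤ Nat.card G.ConnectedComponent + 2 * γ * α ^ (β + 1) := by
          gcongr; exact two_mul_add_mul_le_two_mul_mul_pow hα2 hγ0
  · rw [mul_comm 2 (β + 1), pow_mul]
    exact Nat.mul_le_mul_left _ (Nat.le_self_pow two_ne_zero _)
end

section
/- Let G be a graph and X ⊆ V(G) be a set such that G[X] is connected and |N_G(X)| = a, where N_G(X) denotes the set of vertices outside X with a neighbor in X. Then removing X from G increases the number of connected components by at most a; that is, the number of connected components of G − X is at most the number of connected components of G plus a. -/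
open SimpleGraph

/-- Let `G` be a (finite) graph and `X ⊆ V(G)` be such that `G[X]` is
connected and `|N_G(X)| = a`, where `N_G(X)` is the set of vertices outside `X` with a
neighbor in `X`.  Then the number of connected components of `G − X` is at most the number
of connected components of `G` plus `a`. -/
theorem components_removal_connected_set {V : Type*} [Fintype V] (G : SimpleGraph V)
    (X : Set V) (a : ℕ) (hconn : (G.induce X).Connected)
    (ha : {v : V | v ∉ X ∧ ∃ u ∈ X, G.Adj u v}.ncard = a) :
    Nat.card ((G.induce Xᶜ).ConnectedComponent) ≤ Nat.card G.ConnectedComponent + a := by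
  classical
  set N : Set V := {v : V | v ∉ X ∧ ∃ u ∈ X, G.Adj u v} with hN
  set H := G.induce Xᶜ with hH
  let φ : H.ConnectedComponent → G.ConnectedComponent :=
    ConnectedComponent.map (Embedding.induce Xᶜ).toHom
  -- walks in G starting from a component avoiding N stay in that component
  have key : ∀ {v w : V} (p : G.Walk v w) (hv : v ∈ Xᶜ),
      (∀ x : ↥Xᶜ, H.connectedComponentMk x = H.connectedComponentMk ⟨v, hv⟩ → (x : V) ∉ N) →
      ∃ hw : w ∈ Xᶜ, H.connectedComponentMk ⟨w, hw⟩ = H.connectedComponentMk ⟨v, hv⟩ := by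
    intro v w p
    induction p with
    | nil => intro hv _; exact ⟨hv, rfl⟩
    | @cons v u w hadj p ih =>
      intro hv havoid
      have hvN : v ∉ N := havoid ⟨v, hv⟩ rfl
      have hu : u ∈ Xᶜ := by
        intro huX
        exact hvN ⟨hv, u, huX, hadj.symm⟩
      have hHadj : H.Adj ⟨v, hv⟩ ⟨u, hu⟩ := hadj
      have hcomp : H.connectedComponentMk ⟨u, hu⟩ = H.connectedComponentMk ⟨v, hv⟩ :=
        (ConnectedComponent.connectedComponentMk_eq_of_adj hHadj).symm
      obtain ⟨hw, hw2⟩ := ih hu (fun x hx => havoid x (hx.trans hcomp))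
      exact ⟨hw, hw2.trans hcomp⟩
  -- the injection
  let f : H.ConnectedComponent → G.ConnectedComponent ⊕ ↥N := fun c =>
    if h : ∃ x : ↥Xᶜ, H.connectedComponentMk x = c ∧ (x : V) ∈ N then
      Sum.inr ⟨(h.choose : V), h.choose_spec.2⟩
    else Sum.inl (φ c)
  have hf : Function.Injective f := by
    intro c₁ c₂ heq
    by_cases h₁ : ∃ x : ↥Xᶜ, H.connectedComponentMk x = c₁ ∧ (x : V) ∈ N <;>
      by_cases h₂ : ∃ x : ↥Xᶜ, H.connectedComponentMk x = c₂ ∧ (x : V) ∈ N <;>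
      simp only [f, dif_pos, dif_neg, h₁, h₂] at heq
    · -- both inr
      have hval : (h₁.choose : V) = (h₂.choose : V) := by
        have := Sum.inr_injective heq
        simpa using this
      have : h₁.choose = h₂.choose := Subtype.ext hval
      rw [← h₁.choose_spec.1, ← h₂.choose_spec.1, this]
    · exact (Sum.inr_ne_inl heq).elim
    · exact (Sum.inl_ne_inr heq).elim
    · -- both inl
      have hφ : φ c₁ = φ c₂ := Sum.inl_injective heq
      obtain ⟨⟨v₁, hv₁⟩, rfl⟩ := c₁.exists_rep
      obtain ⟨⟨v₂, hv₂⟩, rfl⟩ := c₂.exists_rep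
      have hreach : G.Reachable v₁ v₂ := by
        have : G.connectedComponentMk v₁ = G.connectedComponentMk v₂ := hφ
        exact ConnectedComponent.exact this
      obtain ⟨p⟩ := hreach
      have havoid : ∀ x : ↥Xᶜ, H.connectedComponentMk x = H.connectedComponentMk ⟨v₁, hv₁⟩ →
          (x : V) ∉ N := by
        intro x hx hxN
        exact h₁ ⟨x, hx, hxN⟩
      obtain ⟨hw, hw2⟩ := key p hv₁ havoid
      exact hw2.symm
  calc Nat.card H.ConnectedComponent ≤ Nat.card (G.ConnectedComponent ⊕ ↥N) :=
        Nat.card_le_card_of_injective f hf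
    _ = Nat.card G.ConnectedComponent + Nat.card ↥N := Nat.card_sum
    _ = Nat.card G.ConnectedComponent + a := by rw [Nat.card_coe_set_eq, ha]
end
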